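/- arXiv:0706.4177 — 7 statements merged into one kernel-verified Lean document; each statement's English description precedes it below -/
import Mathlib

section
/- For every n ≥ 1 and every invertible matrix A ∈ GL_n(ℂ), there exists a C-flow φ of A such that for each pair of indices (i,j) the entry function z ↦ φ(z)_{ij} is analytic (differentiable) on all of ℂ. -/
/-!
By the Jordan–Chevalley decomposition, an invertible `A` factors as `A = S (N + 1)` with `S`
invertible and diagonalisable, `N` nilpotent and `S N = N S`. If `S = P diag(μ) P⁻¹`, then
`z ↦ P diag(μ_i ^ z) P⁻¹` is a flow of `S`, and `z ↦ ∑_{k < m} (z choose k) N ^ k` is a flow of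
`N + 1` (additivity in `z` is the Chu–Vandermonde identity, as `N ^ m = 0`). A matrix commuting
with a diagonal matrix commutes with every function of it, so the two flows commute and their
product is a flow of `A`; its entries are sums of products of exponentials and polynomials in `z`.
-/

open Finset Polynomial Matrix

namespace AddChar

variable {A M : Type*} [AddMonoid A] [Monoid M]

def mulOfCommute (ψ χ : AddChar A M) (h : ∀ a b, Commute (ψ a) (χ b)) : AddChar A M where
  toFun a := ψ a * χ a
  map_zero_eq_one' := by simp
  map_add_eq_mul' a b := by
    rw [map_add_eq_mul, map_add_eq_mul, mul_assoc, ← mul_assoc (ψ b), (h b a).eq]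
    simp only [mul_assoc]

lemma mulOfCommute_apply (ψ χ : AddChar A M) (h : ∀ a b, Commute (ψ a) (χ b)) (a : A) :
    mulOfCommute ψ χ h a = ψ a * χ a :=
  rfl

end AddChar

lemma Polynomial.aeval_eq_of_X_pow_dvd_sub {R A : Type*} [CommRing R] [Ring A] [Algebra R A]
    {x : A} {m : ℕ} (hx : x ^ m = 0) {p q : R[X]} (h : X ^ m ∣ p - q) : aeval x p = aeval x q := by
  obtain ⟨r, hr⟩ := h
  rw [← sub_eq_zero, ← map_sub, hr, map_mul, map_pow, aeval_X, hx, zero_mul]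

section BinomialFlow

variable {R A : Type*} [CommRing R] [BinomialRing R] [Ring A] [Algebra R A]

noncomputable def binomialPolynomial (m : ℕ) (r : R) : R[X] :=
  ∑ k ∈ range m, monomial k (Ring.choose r k)

lemma coeff_binomialPolynomial_of_lt {m k : ℕ} (hk : k < m) (r : R) :
    (binomialPolynomial m r).coeff k = Ring.choose r k := by
  simp [binomialPolynomial, coeff_monomial, hk]

lemma X_pow_dvd_binomialPolynomial_mul_sub (m : ℕ) (r s : R) :
    X ^ m ∣ binomialPolynomial m r * binomialPolynomial m s - binomialPolynomial m (r + s) := by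
  refine X_pow_dvd_iff.mpr fun k hk => ?_
  rw [coeff_sub, coeff_mul, coeff_binomialPolynomial_of_lt hk, Ring.add_choose_eq k (.all r s),
    sub_eq_zero]
  refine sum_congr rfl fun ij hij => ?_
  have := mem_antidiagonal.mp hij
  rw [coeff_binomialPolynomial_of_lt (by omega), coeff_binomialPolynomial_of_lt (by omega)]

lemma X_pow_dvd_binomialPolynomial_natCast_sub (m k : ℕ) :
    X ^ m ∣ binomialPolynomial m (k : R) - (X + 1) ^ k := by
  refine X_pow_dvd_iff.mpr fun d hd => ?_
  rw [coeff_sub, coeff_binomialPolynomial_of_lt hd, coeff_X_add_one_pow, Ring.choose_natCast,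
    sub_self]

noncomputable def binomialFlow {N : A} {m : ℕ} (hN : N ^ m = 0) : AddChar R A where
  toFun r := aeval N (binomialPolynomial m r)
  map_zero_eq_one' := by
    simpa using aeval_eq_of_X_pow_dvd_sub hN (X_pow_dvd_binomialPolynomial_natCast_sub (R := R) m 0)
  map_add_eq_mul' r s := by
    rw [← map_mul]
    exact (aeval_eq_of_X_pow_dvd_sub hN (X_pow_dvd_binomialPolynomial_mul_sub m r s)).symm

variable {N : A} {m : ℕ} (hN : N ^ m = 0)

lemma binomialFlow_apply (r : R) :
    binomialFlow hN r = ∑ k ∈ range m, Ring.choose r k • N ^ k := by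
  simp [binomialFlow, binomialPolynomial, aeval_monomial, Algebra.smul_def]

lemma binomialFlow_natCast (k : ℕ) : binomialFlow hN (k : R) = (N + 1) ^ k :=
  (aeval_eq_of_X_pow_dvd_sub hN (X_pow_dvd_binomialPolynomial_natCast_sub m k)).trans (by simp)

lemma binomialFlow_one : binomialFlow hN (1 : R) = N + 1 := by
  simpa using binomialFlow_natCast hN 1

lemma Commute.binomialFlow {X : A} (h : Commute X N) (r : R) : Commute X (binomialFlow hN r) :=
  Algebra.commute_of_mem_adjoin_singleton_of_commute (aeval_mem_adjoin_singleton R N) h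

end BinomialFlow

lemma Units.commute_conj_left_iff {M : Type*} [Monoid M] (u : Mˣ) {a b : M} :
    Commute (u * a * ↑u⁻¹) b ↔ Commute a (↑u⁻¹ * b * u) := by
  rw [Commute, SemiconjBy, ← (Units.mulLeft_bijective u⁻¹).injective.eq_iff,
    ← (Units.mulRight_bijective u).injective.eq_iff]
  simp [Commute, SemiconjBy, mul_assoc]

variable {n : Type*} [Fintype n] [DecidableEq n]

lemma Matrix.commute_diagonal_comp {R : Type*} [CommRing R] [NoZeroDivisors R] {d : n → R}
    {X : Matrix n n R} (h : Commute (diagonal d) X) (f : R → R) :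
    Commute (diagonal (f ∘ d)) X := by
  ext i j
  have hij := congrFun (congrFun h.eq i) j
  simp only [diagonal_mul, mul_diagonal, Function.comp_apply] at hij ⊢
  rcases eq_or_ne (X i j) 0 with h0 | h0
  · simp [h0]
  · rw [mul_right_cancel₀ h0 (hij.trans (mul_comm _ _)), mul_comm]

section ConjDiagonalCpow

noncomputable def conjDiagonalCpow (P : (Matrix n n ℂ)ˣ) (μ : n → ℂ) (hμ : ∀ i, μ i ≠ 0) :
    AddChar ℂ (Matrix n n ℂ) where
  toFun z := P * diagonal (fun i => μ i ^ z) * (↑P⁻¹ : Matrix n n ℂ)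
  map_zero_eq_one' := by simp
  map_add_eq_mul' z w := by
    simp only [Complex.cpow_add _ _ (hμ _), ← diagonal_mul_diagonal, mul_assoc,
      Units.inv_mul_cancel_left]

variable (P : (Matrix n n ℂ)ˣ) {μ : n → ℂ} (hμ : ∀ i, μ i ≠ 0)

lemma conjDiagonalCpow_apply (z : ℂ) :
    conjDiagonalCpow P μ hμ z = P * diagonal (fun i => μ i ^ z) * (↑P⁻¹ : Matrix n n ℂ) :=
  rfl

lemma conjDiagonalCpow_one :
    conjDiagonalCpow P μ hμ 1 = P * diagonal μ * (↑P⁻¹ : Matrix n n ℂ) := by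
  simp [conjDiagonalCpow_apply]

lemma Commute.conjDiagonalCpow {X : Matrix n n ℂ}
    (h : Commute (P * diagonal μ * (↑P⁻¹ : Matrix n n ℂ)) X) (z : ℂ) :
    Commute (conjDiagonalCpow P μ hμ z) X := by
  rw [Units.commute_conj_left_iff] at h
  rw [conjDiagonalCpow_apply, Units.commute_conj_left_iff]
  exact commute_diagonal_comp h (· ^ z)

lemma differentiable_conjDiagonalCpow_apply (i j : n) :
    Differentiable ℂ fun z => conjDiagonalCpow P μ hμ z i j := by
  simp only [conjDiagonalCpow_apply, mul_apply, diagonal_apply, mul_ite, mul_zero, sum_ite_eq',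
    mem_univ, if_true]
  exact Differentiable.fun_sum fun k _ =>
    ((differentiable_id.const_cpow (.inl (hμ k))).const_mul _).mul_const _

end ConjDiagonalCpow

lemma Matrix.exists_eq_conj_diagonal_of_isSemisimple {K : Type*} [Field K] [IsAlgClosed K]
    {S : Matrix n n K} (hS : Module.End.IsSemisimple (toLin' S)) :
    ∃ (P : (Matrix n n K)ˣ) (μ : n → K), S = P * diagonal μ * (↑P⁻¹ : Matrix n n K) := by
  classical
  have hint := DirectSum.isInternal_submodule_of_iSupIndep_of_iSup_eq_top
    (Module.End.eigenspaces_iSupIndep (toLin' S)) hS.iSup_eigenspace_eq_top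
  let b₀ := hint.collectedBasis fun μ => Module.finBasis K (Module.End.eigenspace (toLin' S) μ)
  let e := b₀.indexEquiv (Pi.basisFun K n)
  let b := b₀.reindex e
  let μ : n → K := fun i => (e.symm i).1
  have hb : ∀ i, toLin' S (b i) = μ i • b i := fun i => by
    simpa [b, b₀] using Module.End.mem_eigenspace_iff.mp
      (hint.collectedBasis_mem (fun μ => Module.finBasis K _) (e.symm i))
  have hdiag : LinearMap.toMatrix b b (toLin' S) = diagonal μ := by
    ext i j
    rw [LinearMap.toMatrix_apply, hb, map_smul, b.repr_self, diagonal_apply]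
    by_cases hij : i = j <;> simp [hij]
  let pi := Pi.basisFun K n
  refine ⟨⟨pi.toMatrix b, b.toMatrix pi, pi.toMatrix_mul_toMatrix_flip b,
    b.toMatrix_mul_toMatrix_flip pi⟩, μ, ?_⟩
  change S = pi.toMatrix b * diagonal μ * b.toMatrix pi
  rw [← hdiag, basis_toMatrix_mul_linearMap_toMatrix_mul_basis_toMatrix,
    LinearMap.toMatrix_eq_toMatrix', LinearMap.toMatrix'_toLin']

lemma Matrix.exists_isSemisimple_mul_add_one_of_isUnit {K : Type*} [Field K] [PerfectField K]
    {A : Matrix n n K} (hA : IsUnit A) :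
    ∃ S N : Matrix n n K, Module.End.IsSemisimple (toLin' S) ∧ IsUnit S ∧ IsNilpotent N ∧
      Commute S N ∧ A = S * (N + 1) := by
  let e : Matrix n n K ≃ₐ[K] Module.End K (n → K) := Matrix.toLinAlgEquiv'
  obtain ⟨Nₑ, hNₑ, Sₑ, hSₑ, hNₑ_nil, hSₑ_ss, hAₑ⟩ :=
    Module.End.exists_isNilpotent_isSemisimple (f := e A)
  set S := e.symm Sₑ
  set N := e.symm Nₑ
  have hSN : Commute S N := (Algebra.commute_of_mem_adjoin_singleton_of_commute hNₑ
    (Algebra.commute_of_mem_adjoin_self hSₑ).symm).map e.symm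
  have hA_eq : A = S + N := by simpa [add_comm] using congrArg e.symm hAₑ
  have hN : IsNilpotent N := hNₑ_nil.map e.symm
  have hNA : Commute N A := hA_eq ▸ hSN.symm.add_right (.refl _)
  have hSu : IsUnit S := by
    simpa [hA_eq] using hN.neg.isUnit_add_left_of_commute hA hNA.neg_left
  refine ⟨S, (↑hSu.unit⁻¹ : Matrix n n K) * N, ?_, hSu,
    (hSN.symm.units_inv_right (u := hSu.unit)).symm.isNilpotent_mul_left hN, ?_, ?_⟩
  · exact (e.apply_symm_apply Sₑ).symm ▸ hSₑ_ss
  · exact (Commute.units_inv_right (u := hSu.unit) (.refl _)).mul_right hSN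
  · rw [mul_add, mul_one, ← mul_assoc, hSu.mul_val_inv, one_mul, hA_eq, add_comm]

lemma differentiable_ringChoose {𝕜 : Type*} [NontriviallyNormedField 𝕜] [CharZero 𝕜] (k : ℕ) :
    Differentiable 𝕜 fun x : 𝕜 => Ring.choose x k := by
  simp only [Ring.choose_eq_smul, smul_eq_mul, ← aeval_eq_smeval]
  exact (differentiable_const _).mul (Polynomial.differentiable_aeval _)

lemma differentiable_matrix_mul_apply {𝕜 E : Type*} [NontriviallyNormedField 𝕜]
    [NormedAddCommGroup E] [NormedSpace 𝕜 E] {l m p : Type*} [Fintype m]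
    {F : E → Matrix l m 𝕜} {G : E → Matrix m p 𝕜}
    (hF : ∀ i j, Differentiable 𝕜 fun x => F x i j) (hG : ∀ i j, Differentiable 𝕜 fun x => G x i j)
    (i : l) (j : p) : Differentiable 𝕜 fun x => (F x * G x) i j := by
  simp only [mul_apply]
  exact Differentiable.fun_sum fun k _ => (hF i k).mul (hG k j)

lemma differentiable_binomialFlow_apply {𝕜 : Type*} [NontriviallyNormedField 𝕜] [CharZero 𝕜]
    {N : Matrix n n 𝕜} {m : ℕ} (hN : N ^ m = 0) (i j : n) :
    Differentiable 𝕜 fun x => binomialFlow (R := 𝕜) hN x i j := by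
  simp only [binomialFlow_apply, Matrix.sum_apply, Matrix.smul_apply, smul_eq_mul]
  exact Differentiable.fun_sum fun k _ => (differentiable_ringChoose k).mul_const _

theorem exists_analytic_C_flow_general (n : ℕ)
    (A : Matrix (Fin n) (Fin n) ℂ) (hA : IsUnit A) :
    ∃ φ : ℂ → Matrix (Fin n) (Fin n) ℂ,
      (∀ z w : ℂ, φ (z + w) = φ z * φ w) ∧
      φ 0 = 1 ∧
      φ 1 = A ∧
      ∀ i j : Fin n, Differentiable ℂ (fun z : ℂ => φ z i j) := by
  obtain ⟨S, N, hS, hSu, ⟨m, hm⟩, hSN, rfl⟩ := exists_isSemisimple_mul_add_one_of_isUnit hA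
  obtain ⟨P, μ, rfl⟩ := exists_eq_conj_diagonal_of_isSemisimple hS
  have hμ (i : Fin n) : μ i ≠ 0 := by
    rw [Units.isUnit_mul_units, Units.isUnit_units_mul, isUnit_diagonal, Pi.isUnit_iff] at hSu
    exact (hSu i).ne_zero
  let σ := conjDiagonalCpow P μ hμ
  let u : AddChar ℂ (Matrix (Fin n) (Fin n) ℂ) := binomialFlow hm
  have hσu (z w : ℂ) : Commute (σ z) (u w) := (hSN.conjDiagonalCpow P hμ z).binomialFlow hm w
  refine ⟨σ.mulOfCommute u hσu, AddChar.map_add_eq_mul _, AddChar.map_zero_eq_one _, ?_, ?_⟩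
  · rw [AddChar.mulOfCommute_apply, conjDiagonalCpow_one, binomialFlow_one]
  · exact differentiable_matrix_mul_apply (differentiable_conjDiagonalCpow_apply P hμ)
      (differentiable_binomialFlow_apply hm)

/-- For every n ≥ 1 and every invertible matrix A ∈ GL_n(ℂ), there exists a
C-flow φ of A such that each entry function z ↦ φ(z)_{ij} is differentiable on all of ℂ. -/
theorem exists_analytic_C_flow (n : ℕ) (hn : 1 ≤ n)
    (A : Matrix (Fin n) (Fin n) ℂ) (hA : IsUnit A) :
    ∃ φ : ℂ → Matrix (Fin n) (Fin n) ℂ,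
      (∀ z w : ℂ, φ (z + w) = φ z * φ w) ∧
      φ 0 = 1 ∧
      φ 1 = A ∧
      ∀ i j : Fin n, Differentiable ℂ (fun z : ℂ => φ z i j) :=
  exists_analytic_C_flow_general n A hA
end

section
/- Let n ≥ 1, let λ ∈ ℂ be nonzero, and fix L ∈ ℂ with exp(L) = λ. Let N denote the n×n matrix with 1 on the superdiagonal and 0 elsewhere, and let B := λ·I + N. Then the function φ(z) := Σ_{i=0}^{n−1} g_i(z)·exp((z−i)·L)·N^i is a C-flow of B, i.e. φ(z+w) = φ(z)·φ(w) for all z, w ∈ ℂ, φ(0) = I, and φ(1) = B. -/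
/-!
Writing `g k z = Ring.choose z k`, the Chu–Vandermonde identity
`g k (z + w) = ∑_{i + j = k} g i z * g j w` together with `exp (a + b) = exp a * exp b` says that
the coefficients `c z k = g k z * exp ((z - k) * L)` convolve: `c (z + w) = c z ⋆ c w`. Since
`N ^ n = 0`, the truncated sums `∑_{k < n} c z k • N ^ k` multiply like power series, which gives
the flow property. At `z = 0` and `z = 1` only the coefficients `k = 0` and `k ≤ 1` survive,
because `g k m = m.choose k`.
-/

/-- `g l z = z(z-1)⋯(z-l+1)/l!`, with `g 0 z = 1`. -/
noncomputable def g (l : ℕ) (z : ℂ) : ℂ :=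
  (∏ i ∈ Finset.range l, (z - i)) / (l.factorial : ℂ)

open Finset

theorem g_eq_choose (l : ℕ) (z : ℂ) : g l z = Ring.choose z l := by
  rw [Ring.choose_eq_smul, g, ← descPochhammer_eval_eq_prod_range, smul_eq_mul, div_eq_inv_mul,
    ← descPochhammer_map (Int.castRingHom ℂ), Polynomial.eval_map, ← Polynomial.aeval_eq_smeval]
  rfl

theorem g_add (k : ℕ) (z w : ℂ) : g k (z + w) = ∑ p ∈ antidiagonal k, g p.1 z * g p.2 w := by
  simp only [g_eq_choose, Ring.add_choose_eq k (Commute.all z w)]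

theorem g_natCast (m k : ℕ) : g k m = m.choose k := by
  rw [g_eq_choose, Ring.choose_natCast]

theorem g_mul_exp_add (L z w : ℂ) (k : ℕ) :
    g k (z + w) * Complex.exp ((z + w - k) * L) =
      ∑ p ∈ antidiagonal k,
        g p.1 z * Complex.exp ((z - p.1) * L) * (g p.2 w * Complex.exp ((w - p.2) * L)) := by
  rw [g_add, sum_mul]
  refine sum_congr rfl fun p hp => ?_
  have hk : (k : ℂ) = p.1 + p.2 := by exact_mod_cast (mem_antidiagonal.1 hp).symm
  rw [hk, show (z + w - (p.1 + p.2)) * L = (z - p.1) * L + (w - p.2) * L by ring, Complex.exp_add]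
  ring

def upperShift (n : ℕ) (R : Type*) [Zero R] [One R] : Matrix (Fin n) (Fin n) R :=
  Matrix.of fun i j => if (i : ℕ) + 1 = j then 1 else 0

theorem upperShift_pow_apply {n : ℕ} {R : Type*} [Semiring R] (k : ℕ) (i j : Fin n) :
    (upperShift n R ^ k) i j = if (i : ℕ) + k = j then 1 else 0 := by
  induction k generalizing i with
  | zero => simp [Matrix.one_apply, Fin.ext_iff]
  | succ k ih =>
    rw [pow_succ', Matrix.mul_apply]
    simp_rw [ih]
    simp only [upperShift, Matrix.of_apply, ite_mul, one_mul, zero_mul]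
    by_cases h : (i : ℕ) + 1 < n
    · rw [sum_eq_single_of_mem ⟨i + 1, h⟩ (mem_univ _)] <;> grind
    · rw [sum_eq_zero] <;> grind

theorem upperShift_pow_self (n : ℕ) (R : Type*) [Semiring R] : upperShift n R ^ n = 0 := by
  ext i j
  rw [upperShift_pow_apply, if_neg (by omega), Matrix.zero_apply]

section NilpotentPowerSums

variable {R A : Type*} [CommSemiring R] [Semiring A] [Algebra R A] {M : A} {n : ℕ}

theorem sum_smul_pow_mul_sum_smul_pow (hM : M ^ n = 0) (a b : ℕ → R) :
    (∑ i ∈ range n, a i • M ^ i) * (∑ j ∈ range n, b j • M ^ j) =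
      ∑ k ∈ range n, (∑ p ∈ antidiagonal k, a p.1 * b p.2) • M ^ k := by
  calc (∑ i ∈ range n, a i • M ^ i) * (∑ j ∈ range n, b j • M ^ j)
      = ∑ i ∈ range n, ∑ j ∈ range (n - i), (a i * b j) • M ^ (i + j) := by
        simp only [sum_mul_sum, smul_mul_smul_comm, ← pow_add]
        refine sum_congr rfl fun i _ => (sum_subset (range_subset_range.2 (n.sub_le i)) ?_).symm
        intro j _ hj
        rw [pow_eq_zero_of_le (by grind) hM, smul_zero]
    _ = ∑ k ∈ range n, ∑ i ∈ range (k + 1), (a i * b (k - i)) • M ^ (i + (k - i)) :=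
        (sum_range_diag_flip n fun i j => (a i * b j) • M ^ (i + j)).symm
    _ = _ := by
        refine sum_congr rfl fun k _ => ?_
        rw [Nat.sum_antidiagonal_eq_sum_range_succ_mk, sum_smul]
        refine sum_congr rfl fun i hi => ?_
        rw [Nat.add_sub_cancel' (by grind)]

theorem sum_range_smul_pow_eq_of_forall_ge (hM : M ^ n = 0) {c : ℕ → R} {m : ℕ}
    (hc : ∀ k ≥ m, c k = 0) : ∑ k ∈ range n, c k • M ^ k = ∑ k ∈ range m, c k • M ^ k := by
  rw [← eventually_constant_sum (N := n) (n := max n m) _ (le_max_left n m),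
    eventually_constant_sum (N := m) _ (le_max_right n m)]
  · intro k hk; rw [hc k hk, zero_smul]
  · intro k hk; rw [pow_eq_zero_of_le hk hM, smul_zero]

end NilpotentPowerSums

theorem jordan_block_C_flow_general (n : ℕ) (lam L : ℂ)
    (hL : Complex.exp L = lam)
    (N : Matrix (Fin n) (Fin n) ℂ)
    (hN : N = Matrix.of fun i j : Fin n => if (i : ℕ) + 1 = (j : ℕ) then 1 else 0)
    (B : Matrix (Fin n) (Fin n) ℂ)
    (hB : B = lam • (1 : Matrix (Fin n) (Fin n) ℂ) + N)
    (φ : ℂ → Matrix (Fin n) (Fin n) ℂ)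
    (hφ : ∀ z : ℂ,
      φ z = ∑ i ∈ Finset.range n, (g i z * Complex.exp ((z - i) * L)) • N ^ i) :
    (∀ z w : ℂ, φ (z + w) = φ z * φ w) ∧ φ 0 = 1 ∧ φ 1 = B := by
  have hNn : N ^ n = 0 := hN ▸ upperShift_pow_self n ℂ
  refine ⟨fun z w => ?_, ?_, ?_⟩
  · simp only [hφ, sum_smul_pow_mul_sum_smul_pow hNn, g_mul_exp_add]
  · rw [hφ, sum_range_smul_pow_eq_of_forall_ge hNn (m := 1)]
    · simp [g]
    · intro k hk
      rw [← Nat.cast_zero, g_natCast, Nat.choose_eq_zero_of_lt hk]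
      simp
  · rw [hφ, sum_range_smul_pow_eq_of_forall_ge hNn (m := 2)]
    · simp [sum_range_succ, hL, hB, g]
    · intro k hk
      rw [← Nat.cast_one, g_natCast, Nat.choose_eq_zero_of_lt hk]
      simp

/-- with `B = λ·I + N` (`N` the superdiagonal nilpotent matrix), `λ ≠ 0`,
`exp L = λ`, the function `φ(z) = Σ_{i<n} g_i(z)·exp((z-i)·L)·N^i` is a C-flow of `B`. -/
theorem jordan_block_C_flow (n : ℕ) (hn : 1 ≤ n) (lam L : ℂ) (hlam : lam ≠ 0)
    (hL : Complex.exp L = lam)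
    (N : Matrix (Fin n) (Fin n) ℂ)
    (hN : N = Matrix.of fun i j : Fin n => if (i : ℕ) + 1 = (j : ℕ) then 1 else 0)
    (B : Matrix (Fin n) (Fin n) ℂ)
    (hB : B = lam • (1 : Matrix (Fin n) (Fin n) ℂ) + N)
    (φ : ℂ → Matrix (Fin n) (Fin n) ℂ)
    (hφ : ∀ z : ℂ,
      φ z = ∑ i ∈ Finset.range n, (g i z * Complex.exp ((z - i) * L)) • N ^ i) :
    (∀ z w : ℂ, φ (z + w) = φ z * φ w) ∧ φ 0 = 1 ∧ φ 1 = B :=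
  jordan_block_C_flow_general n lam L hL N hN B hB φ hφ
end

section
/- Let n ≥ 1 and A ∈ GL_n(ℂ) with minimal polynomial m(X) = X^p − c_{p−1}X^{p−1} − ⋯ − c_1X − c_0 of degree p, and let C_m be the companion matrix of m. Then for every vector λ = (λ_1, …, λ_p) ∈ ℂ^p one has A · (Σ_{i=1}^p λ_i·A^{−i}) = Σ_{i=1}^p (C_m·λ)_i·A^{−i}, where C_m·λ denotes the matrix–vector product. -/
/-- The companion matrix of the monic polynomial
`X^p − c_{p−1}X^{p−1} − ⋯ − c_1 X − c_0` (where `c i` is the coefficient `c_i`):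
its first column is `(c_{p−1}, …, c_0)ᵗ`, its `(i, i+1)` entries are `1`,
and all other entries are `0`. -/
def companionOf (p : ℕ) (c : Fin p → ℂ) : Matrix (Fin p) (Fin p) ℂ :=
  Matrix.of fun i j : Fin p =>
    if (j : ℕ) = (i : ℕ) + 1 then 1 else if (j : ℕ) = 0 then c i.rev else 0

/-! With `b i = A ^ (-1 - i)`, multiplication by `A` sends `b (j + 1)` to `b j`, and sends `b 0`
to `1 = ∑ i, c (p - 1 - i) • b i`, which is `m(A) = 0` multiplied by `A ^ (-p)`. These are exactly
the columns of the companion matrix, so `A` acts on coordinates with respect to the `b i` as `C_m`. -/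

open Polynomial Matrix

theorem pow_eq_sum_smul_pow_of_aeval_eq_zero {R S : Type*} [CommRing R] [Ring S] [Algebra R S]
    {a : S} {p : ℕ} {c : Fin p → R}
    (h : aeval a (X ^ p - ∑ i : Fin p, C (c i) * X ^ (i : ℕ)) = 0) :
    a ^ p = ∑ i : Fin p, c i • a ^ (i : ℕ) := by
  simpa [sub_eq_zero, Algebra.smul_def] using h

theorem Matrix.sum_mulVec_apply_smul {ι R M : Type*} [Fintype ι] [CommSemiring R]
    [AddCommMonoid M] [Module R M] (N : Matrix ι ι R) (v : ι → R) (b : ι → M) :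
    ∑ i, (N *ᵥ v) i • b i = ∑ j, v j • ∑ i, N i j • b i := by
  simp only [mulVec, dotProduct, Finset.sum_smul, Finset.smul_sum, smul_smul]
  rw [Finset.sum_comm]
  exact Finset.sum_congr rfl fun j _ => Finset.sum_congr rfl fun i _ => by rw [mul_comm]

theorem Matrix.sum_rev_smul_zpow_neg_one_sub_eq_one {n R : Type*} [Fintype n] [DecidableEq n]
    [CommRing R] {A : Matrix n n R} (hA : IsUnit A.det)
    {p : ℕ} {c : Fin p → R} (h : A ^ p = ∑ i : Fin p, c i • A ^ (i : ℕ)) :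
    ∑ i : Fin p, c i.rev • A ^ (-1 - (i : ℤ)) = 1 := by
  calc ∑ i : Fin p, c i.rev • A ^ (-1 - (i : ℤ))
      = ∑ i : Fin p, c i • (A ^ (i : ℕ) * A ^ (-(p : ℤ))) := by
        refine Fintype.sum_equiv Fin.revPerm _ _ fun i => ?_
        rw [Fin.revPerm_apply, ← zpow_natCast, ← zpow_add hA]
        congr 2
        rw [Fin.val_rev]
        omega
    _ = A ^ (p : ℤ) * A ^ (-(p : ℤ)) := by
        simp only [← smul_mul_assoc, ← Finset.sum_mul, zpow_natCast, h]
    _ = 1 := by rw [← zpow_add hA, add_neg_cancel, zpow_zero]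

section

variable {q : ℕ} (c : Fin (q + 1) → ℂ)

theorem companionOf_apply_zero (i : Fin (q + 1)) : companionOf (q + 1) c i 0 = c i.rev := by
  simp [companionOf]

theorem companionOf_apply_succ (i : Fin (q + 1)) (j : Fin q) :
    companionOf (q + 1) c i j.succ = if i = j.castSucc then 1 else 0 := by
  simp only [companionOf, of_apply, Fin.val_succ, Fin.ext_iff, Fin.val_castSucc]
  grind

end

theorem mul_zpow_neg_one_sub_eq_sum_companionOf {n : Type*} [Fintype n] [DecidableEq n]
    {A : Matrix n n ℂ} (hA : IsUnit A.det) {p : ℕ} {c : Fin p → ℂ}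
    (h : A ^ p = ∑ i : Fin p, c i • A ^ (i : ℕ)) (j : Fin p) :
    A * A ^ (-1 - (j : ℤ)) = ∑ i, companionOf p c i j • A ^ (-1 - (i : ℤ)) := by
  obtain ⟨q, rfl⟩ := Nat.exists_eq_succ_of_ne_zero j.pos.ne'
  rw [← zpow_one_add hA]
  cases j using Fin.cases with
  | zero =>
    simp [companionOf_apply_zero, sum_rev_smul_zpow_neg_one_sub_eq_one hA h]
  | succ j =>
    simp only [companionOf_apply_succ, ite_smul, one_smul, zero_smul, Finset.sum_ite_eq',
      Finset.mem_univ, if_true]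
    congr 1
    push_cast [Fin.val_succ, Fin.val_castSucc]
    ring

theorem mul_span_basis_eq_companion_mulVec_general (n : ℕ)
    (A : Matrix (Fin n) (Fin n) ℂ) (hA : IsUnit A) (p : ℕ)
    (c : Fin p → ℂ)
    (hm : minpoly ℂ A =
      Polynomial.X ^ p - ∑ i : Fin p, Polynomial.C (c i) * Polynomial.X ^ (i : ℕ))
    (lam : Fin p → ℂ) :
    A * (∑ i : Fin p, lam i • A ^ (-1 - (i : ℤ))) =
      ∑ i : Fin p, (companionOf p c).mulVec lam i • A ^ (-1 - (i : ℤ)) := by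
  have hdet : IsUnit A.det := (isUnit_iff_isUnit_det A).mp hA
  have hpow : A ^ p = ∑ i : Fin p, c i • A ^ (i : ℕ) :=
    pow_eq_sum_smul_pow_of_aeval_eq_zero (hm ▸ minpoly.aeval ℂ A)
  simp only [Finset.mul_sum, Matrix.mul_smul, mul_zpow_neg_one_sub_eq_sum_companionOf hdet hpow,
    sum_mulVec_apply_smul]

/-- if `A` has minimal polynomial `m = X^p − c_{p−1}X^{p−1} − ⋯ − c_0`
with companion matrix `C_m`, then for every vector `λ ∈ ℂ^p`,
`A · (Σ_{i=1}^p λ_i A^{−i}) = Σ_{i=1}^p (C_m λ)_i A^{−i}` (here zero-based: index `i : Fin p`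
corresponds to the basis element `A^{−1−i}`). -/
theorem mul_span_basis_eq_companion_mulVec (n : ℕ) (hn : 1 ≤ n)
    (A : Matrix (Fin n) (Fin n) ℂ) (hA : IsUnit A) (p : ℕ) (hp : 1 ≤ p)
    (c : Fin p → ℂ)
    (hm : minpoly ℂ A =
      Polynomial.X ^ p - ∑ i : Fin p, Polynomial.C (c i) * Polynomial.X ^ (i : ℕ))
    (lam : Fin p → ℂ) :
    A * (∑ i : Fin p, lam i • A ^ (-1 - (i : ℤ))) =
      ∑ i : Fin p, (companionOf p c).mulVec lam i • A ^ (-1 - (i : ℤ)) :=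
  mul_span_basis_eq_companion_mulVec_general n A hA p c hm lam
end

section
/- Let n ≥ 1 and A ∈ GL_n(ℂ) with minimal polynomial m(X) of degree p, and let C_m be the companion matrix of m. Then there exist matrices W ∈ Mat_{p×n}(ℂ) and S ∈ Mat_{n×p}(ℂ) such that W·S = I_p and for every polynomial q ∈ ℂ[X] one has q(C_m) = W · q(A) · S. -/
open Polynomial Matrix

theorem Module.End.exists_aeval_apply_eq_zero_iff_minpoly_dvd {K M : Type*} [Field K]
    [AddCommGroup M] [Module K M] [FiniteDimensional K M] (f : Module.End K M) :
    ∃ v : M, ∀ q : K[X], aeval f q v = 0 ↔ minpoly K f ∣ q := by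
  obtain ⟨x, hx⟩ := Module.exists_ker_toSpanSingleton_eq_annihilator K[X] (Module.AEval' f)
  refine ⟨(Module.AEval'.of f).symm x, fun q => ?_⟩
  rw [← Ideal.mem_span_singleton, span_minpoly_eq_annihilator, ← hx, LinearMap.mem_ker,
    LinearMap.toSpanSingleton_apply, ← (Module.AEval'.of f).symm.map_eq_zero_iff,
    Module.AEval.of_symm_smul]
  rfl

theorem Polynomial.degree_X_pow_sub_sum_fin {R : Type*} [CommRing R] [Nontrivial R] {p : ℕ}
    (c : Fin p → R) : (X ^ p - ∑ i : Fin p, C (c i) * X ^ (i : ℕ)).degree = (p : WithBot ℕ) := by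
  rw [degree_sub_eq_left_of_degree_lt] <;> rw [degree_X_pow]
  exact degree_sum_fin_lt c

namespace Matrix

theorem exists_mul_eq_one_of_mulVec_injective {m n K : Type*} [Fintype m] [Fintype n]
    [DecidableEq m] [DecidableEq n] [Field K] {S : Matrix m n K}
    (hS : Function.Injective S.mulVec) : ∃ W : Matrix n m K, W * S = 1 := by
  obtain ⟨g, hg⟩ := LinearMap.exists_leftInverse_of_injective S.mulVecLin
    (LinearMap.ker_eq_bot.mpr hS)
  refine ⟨LinearMap.toMatrix' g, ?_⟩
  simpa [LinearMap.toMatrix'_comp, ← Matrix.toLin'_apply'] using congrArg LinearMap.toMatrix' hg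

theorem aeval_mul_eq_mul_aeval {m n R : Type*} [Fintype m] [Fintype n] [DecidableEq m]
    [DecidableEq n] [CommRing R] {A : Matrix m m R} {B : Matrix n n R} {S : Matrix m n R}
    (h : A * S = S * B) (q : R[X]) : aeval A q * S = S * aeval B q := by
  have hpow : ∀ k : ℕ, A ^ k * S = S * B ^ k := by
    intro k
    induction k with
    | zero => simp
    | succ k ih =>
      rw [pow_succ, Matrix.mul_assoc, h, ← Matrix.mul_assoc, ih, Matrix.mul_assoc, ← pow_succ]
  induction q using Polynomial.induction_on' with
  | add q r hq hr => simp [Matrix.add_mul, Matrix.mul_add, hq, hr]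
  | monomial k a => simp [aeval_monomial, ← Algebra.smul_def, hpow]

variable {ι K : Type*} [Fintype ι] [DecidableEq ι] [Field K]

theorem exists_aeval_mulVec_eq_zero_iff_minpoly_dvd (A : Matrix ι ι K) :
    ∃ v : ι → K, ∀ q : K[X], aeval A q *ᵥ v = 0 ↔ minpoly K A ∣ q := by
  obtain ⟨v, hv⟩ := Module.End.exists_aeval_apply_eq_zero_iff_minpoly_dvd (toLin' A)
  refine ⟨v, fun q => ?_⟩
  have h : aeval (toLin' A) q = toLin' (aeval A q) := aeval_algHom_apply toLinAlgEquiv' A q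
  rw [← minpoly_toLin', ← hv, h, toLin'_apply]

theorem linearIndependent_pow_mulVec {A : Matrix ι ι K} {v : ι → K} {p : ℕ}
    (hv : ∀ q : K[X], q.degree < p → aeval A q *ᵥ v = 0 → q = 0) :
    LinearIndependent K fun i : Fin p => A ^ (i : ℕ) *ᵥ v := by
  rw [Fintype.linearIndependent_iff]
  intro g hg
  set q := (degreeLTEquiv K p).symm g
  have hq : aeval A (q : K[X]) *ᵥ v = ∑ i, g i • (A ^ (i : ℕ) *ᵥ v) := by
    simp [q, degreeLTEquiv, map_sum, aeval_monomial, sum_mulVec, ← Algebra.smul_def, smul_mulVec]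
  have hq0 : q = 0 := Subtype.ext (hv q (mem_degreeLT.mp q.2) (hq.trans hg))
  simpa [q, funext_iff] using hq0

/-- Columns `A^{p-1} v, …, A v, v`: the reversed order matches the convention of `companionOf`,
whose first column carries `c_{p-1}, …, c_0`. -/
def krylovMatrix (A : Matrix ι ι K) (v : ι → K) (p : ℕ) : Matrix ι (Fin p) K :=
  Matrix.of fun i j => (A ^ (j.rev : ℕ) *ᵥ v) i

theorem mulVec_krylovMatrix_injective {A : Matrix ι ι K} {v : ι → K} {p : ℕ}
    (hv : ∀ q : K[X], q.degree < p → aeval A q *ᵥ v = 0 → q = 0) :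
    Function.Injective (krylovMatrix A v p).mulVec :=
  mulVec_injective_iff.mpr ((linearIndependent_pow_mulVec hv).comp Fin.rev Fin.rev_injective)

end Matrix

theorem companionOf_rev_apply {p : ℕ} (c : Fin p → ℂ) (l j : Fin p) :
    companionOf p c l.rev j =
      if (l : ℕ) = j.rev + 1 then 1 else if (j : ℕ) = 0 then c l else 0 := by
  simp only [companionOf, of_apply, Fin.rev_rev, Fin.val_rev]
  have := l.isLt
  have := j.isLt
  split_ifs <;> first | rfl | omega

theorem mul_krylovMatrix_eq_krylovMatrix_mul_companionOf {ι : Type*} [Fintype ι] [DecidableEq ι]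
    {A : Matrix ι ι ℂ} {v : ι → ℂ} {p : ℕ} {c : Fin p → ℂ}
    (hv : aeval A (X ^ p - ∑ i : Fin p, C (c i) * X ^ (i : ℕ)) *ᵥ v = 0) :
    A * krylovMatrix A v p = krylovMatrix A v p * companionOf p c := by
  have hpow : A ^ p *ᵥ v = ∑ l : Fin p, c l • (A ^ (l : ℕ) *ᵥ v) := by
    simpa [sub_mulVec, sub_eq_zero, sum_mulVec, ← Algebra.smul_def, smul_mulVec] using hv
  ext i j
  have hA : (A * krylovMatrix A v p) i j = (A ^ ((j.rev : ℕ) + 1) *ᵥ v) i := by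
    rw [pow_succ', ← mulVec_mulVec]
    rfl
  rw [hA, mul_apply, ← Equiv.sum_comp Fin.revPerm]
  simp only [companionOf_rev_apply, krylovMatrix, of_apply, Fin.revPerm_apply, Fin.rev_rev]
  by_cases hj : (j : ℕ) = 0
  · have hp : (j.rev : ℕ) + 1 = p := by rw [Fin.val_rev]; omega
    rw [hp, hpow, Finset.sum_apply]
    refine Finset.sum_congr rfl fun l _ => ?_
    rw [if_neg l.isLt.ne, if_pos hj, mul_comm]
    rfl
  · have hlt : (j.rev : ℕ) + 1 < p := by rw [Fin.val_rev]; omega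
    simp_rw [hj, show ∀ l : Fin p, (l : ℕ) = j.rev + 1 ↔ l = ⟨_, hlt⟩ from
      fun l => by simp [Fin.ext_iff]]
    simp

theorem exists_WS_companion_aeval_general (n : ℕ)
    (A : Matrix (Fin n) (Fin n) ℂ) (p : ℕ)
    (c : Fin p → ℂ)
    (hm : minpoly ℂ A =
      Polynomial.X ^ p - ∑ i : Fin p, Polynomial.C (c i) * Polynomial.X ^ (i : ℕ)) :
    ∃ (W : Matrix (Fin p) (Fin n) ℂ) (S : Matrix (Fin n) (Fin p) ℂ),
      W * S = 1 ∧
      ∀ q : Polynomial ℂ,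
        Polynomial.aeval (companionOf p c) q = W * Polynomial.aeval A q * S := by
  obtain ⟨v, hv⟩ := exists_aeval_mulVec_eq_zero_iff_minpoly_dvd A
  have hdeg : (minpoly ℂ A).degree = p := by rw [hm, degree_X_pow_sub_sum_fin]
  have hinj : Function.Injective (krylovMatrix A v p).mulVec :=
    mulVec_krylovMatrix_injective fun q hq hqv =>
      eq_zero_of_dvd_of_degree_lt ((hv q).mp hqv) (hdeg ▸ hq)
  obtain ⟨W, hW⟩ := exists_mul_eq_one_of_mulVec_injective hinj
  have hAS : A * krylovMatrix A v p = krylovMatrix A v p * companionOf p c :=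
    mul_krylovMatrix_eq_krylovMatrix_mul_companionOf ((hv _).mpr (dvd_of_eq hm))
  refine ⟨W, krylovMatrix A v p, hW, fun q => ?_⟩
  rw [Matrix.mul_assoc, aeval_mul_eq_mul_aeval hAS, ← Matrix.mul_assoc, hW, Matrix.one_mul]

/-- if `A` has minimal polynomial `m = X^p − c_{p−1}X^{p−1} − ⋯ − c_0` with
companion matrix `C_m`, then there are matrices `W ∈ Mat_{p×n}(ℂ)` and `S ∈ Mat_{n×p}(ℂ)`
with `W·S = I_p` and `q(C_m) = W·q(A)·S` for every polynomial `q ∈ ℂ[X]`. -/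
theorem exists_WS_companion_aeval (n : ℕ) (hn : 1 ≤ n)
    (A : Matrix (Fin n) (Fin n) ℂ) (hA : IsUnit A) (p : ℕ) (hp : 1 ≤ p)
    (c : Fin p → ℂ)
    (hm : minpoly ℂ A =
      Polynomial.X ^ p - ∑ i : Fin p, Polynomial.C (c i) * Polynomial.X ^ (i : ℕ)) :
    ∃ (W : Matrix (Fin p) (Fin n) ℂ) (S : Matrix (Fin n) (Fin p) ℂ),
      W * S = 1 ∧
      ∀ q : Polynomial ℂ,
        Polynomial.aeval (companionOf p c) q = W * Polynomial.aeval A q * S :=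
  exists_WS_companion_aeval_general n A p c hm
end

section
/- Let n ≥ 1 and A ∈ GL_n(ℂ) with minimal polynomial m(X) = X^p − c_{p−1}X^{p−1} − ⋯ − c_1X − c_0, let C_m be the companion matrix of m, and let c := (c_{p−1}, c_{p−2}, …, c_0) ∈ ℂ^p. Then C_m is invertible, and for every integer k ∈ ℤ one has A^k = Σ_{i=1}^p ((C_m)^k·c)_i · A^{−i}, where (C_m)^k·c denotes the matrix–vector product of the k-th (integer) power of C_m with c. -/
open Polynomial
open scoped Matrix

theorem minpoly_coeff_zero_ne_zero_of_isUnit {K M : Type*} [Field K] [Ring M] [Algebra K M]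
    {a : M} (ha : IsUnit a) (hint : IsIntegral K a) : (minpoly K a).coeff 0 ≠ 0 := by
  intro h0
  obtain ⟨q, hq⟩ := X_dvd_iff.mpr h0
  have hq0 : q ≠ 0 := by
    rintro rfl
    exact minpoly.ne_zero hint (by rw [hq, mul_zero])
  have hqa : aeval a q = 0 := by
    rw [← ha.mul_right_eq_zero]
    simpa [hq] using minpoly.aeval K a
  have hdeg := minpoly.degree_le_of_ne_zero K a hq0 hqa
  rw [hq, degree_mul, degree_X, degree_eq_natDegree hq0] at hdeg
  norm_cast at hdeg
  omega

theorem pow_eq_sum_smul_pow_of_minpoly_eq {K M : Type*} [Field K] [Ring M] [Algebra K M]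
    {a : M} {p : ℕ} {c : Fin p → K}
    (hm : minpoly K a = X ^ p - ∑ i : Fin p, C (c i) * X ^ (i : ℕ)) :
    a ^ p = ∑ i, c i • a ^ (i : ℕ) := by
  have h := minpoly.aeval K a
  rw [hm] at h
  simpa [sub_eq_zero, Algebra.smul_def] using h

theorem apply_zpow_mulVec_of_apply_mulVec {ι R M : Type*} [Fintype ι] [DecidableEq ι]
    [CommRing R] [Monoid M] {C : Matrix ι ι R} (hC : IsUnit C) (a : Mˣ) {f : (ι → R) → M}
    (hf : ∀ v, f (C *ᵥ v) = a * f v) (k : ℤ) (v : ι → R) :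
    f (C ^ k *ᵥ v) = ↑(a ^ k) * f v := by
  have hdet : IsUnit C.det := (Matrix.isUnit_iff_isUnit_det C).mp hC
  have hf_inv : ∀ v, f (C⁻¹ *ᵥ v) = ↑a⁻¹ * f v := fun v => by
    conv_rhs => rw [← Matrix.one_mulVec v, ← Matrix.mul_nonsing_inv C hdet,
      ← Matrix.mulVec_mulVec, hf, Units.inv_mul_cancel_left]
  induction k using Int.induction_on generalizing v with
  | zero => simp
  | succ k ih =>
    rw [Matrix.zpow_add_one hdet, ← Matrix.mulVec_mulVec, ih, hf, zpow_add_one, Units.val_mul,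
      mul_assoc]
  | pred k ih =>
    rw [Matrix.zpow_sub_one hdet, ← Matrix.mulVec_mulVec, ih, hf_inv, zpow_sub_one,
      Units.val_mul, mul_assoc]

theorem companionOf_mulVec (m : ℕ) (c v : Fin (m + 1) → ℂ) :
    companionOf (m + 1) c *ᵥ v = v 0 • (fun j => c j.rev) + Fin.snoc (fun i => v i.succ) 0 := by
  ext i
  refine Fin.lastCases ?_ (fun i => ?_) i
  · simp [Matrix.mulVec, dotProduct, companionOf, mul_comm, (Fin.isLt _).ne]
  · simp [Matrix.mulVec, dotProduct, companionOf, Fin.sum_univ_succ, mul_comm, Fin.val_inj]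

theorem isUnit_companionOf_succ (m : ℕ) (c : Fin (m + 1) → ℂ) (hc : c 0 ≠ 0) :
    IsUnit (companionOf (m + 1) c) := by
  rw [← Matrix.mulVec_injective_iff_isUnit, ← (companionOf (m + 1) c).coe_mulVecLin,
    injective_iff_map_eq_zero]
  intro v hv
  rw [Matrix.coe_mulVecLin, companionOf_mulVec] at hv
  have hv0 : v 0 = 0 := by
    simpa [hc] using congrFun hv (Fin.last m)
  have hvsucc (i : Fin m) : v i.succ = 0 := by
    simpa [hv0] using congrFun hv i.castSucc
  exact funext fun i => Fin.cases hv0 hvsucc i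

theorem isUnit_companionOf_of_minpoly_eq {M : Type*} [Ring M] [Algebra ℂ M] {a : M}
    (ha : IsUnit a) (hint : IsIntegral ℂ a) {p : ℕ} {c : Fin p → ℂ}
    (hm : minpoly ℂ a = X ^ p - ∑ i : Fin p, C (c i) * X ^ (i : ℕ)) :
    IsUnit (companionOf p c) := by
  rcases p with _ | m
  · exact isUnit_of_subsingleton _
  · refine isUnit_companionOf_succ m c fun h0 => minpoly_coeff_zero_ne_zero_of_isUnit ha hint ?_
    rw [hm]
    simp [h0, @eq_comm ℕ 0, Fin.val_eq_zero_iff]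

section
variable {R M : Type*} [CommRing R] [Ring M] [Algebra R M]

noncomputable def invPowCombination (a : Mˣ) (p : ℕ) : (Fin p → R) →ₗ[R] M :=
  Fintype.linearCombination R fun i : Fin p => ((a ^ (-1 - (i : ℤ)) : Mˣ) : M)

theorem invPowCombination_apply (a : Mˣ) {p : ℕ} (v : Fin p → R) :
    invPowCombination a p v = ∑ i, v i • ((a ^ (-1 - (i : ℤ)) : Mˣ) : M) :=
  Fintype.linearCombination_apply R _ v

theorem invPowCombination_rev_eq_one {a : Mˣ} {p : ℕ} {c : Fin p → R}
    (hrel : (a : M) ^ p = ∑ i, c i • (a : M) ^ (i : ℕ)) :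
    invPowCombination a p (fun j => c j.rev) = 1 := by
  have hpow (j : Fin p) :
      ((a ^ (-1 - (j : ℤ)) : Mˣ) : M) = ↑(a ^ (-(p : ℤ))) * (a : M) ^ (j.rev : ℕ) := by
    rw [← Units.val_pow_eq_pow_val, ← Units.val_mul, ← zpow_natCast, ← zpow_add, Fin.val_rev]
    congr 2
    omega
  calc invPowCombination a p (fun j => c j.rev)
      = ∑ i, c i • (↑(a ^ (-(p : ℤ))) * (a : M) ^ (i : ℕ)) :=
        (invPowCombination_apply a _).trans <|
          Fintype.sum_bijective Fin.rev Fin.rev_bijective _ _ fun j => by rw [hpow]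
    _ = ↑(a ^ (-(p : ℤ))) * ↑(a ^ p) := by
        simp_rw [← mul_smul_comm, ← Finset.mul_sum, ← hrel, Units.val_pow_eq_pow_val]
    _ = 1 := by rw [zpow_neg, zpow_natCast, Units.inv_mul]

end

theorem invPowCombination_companionOf_mulVec {M : Type*} [Ring M] [Algebra ℂ M] {a : Mˣ}
    {p : ℕ} {c : Fin p → ℂ} (hrel : (a : M) ^ p = ∑ i, c i • (a : M) ^ (i : ℕ)) (v : Fin p → ℂ) :
    invPowCombination a p (companionOf p c *ᵥ v) = a * invPowCombination a p v := by
  rcases p with _ | m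
  · simp [invPowCombination_apply]
  have hshift (w : Fin m → ℂ) : invPowCombination a (m + 1) (Fin.snoc w 0)
      = ∑ i : Fin m, w i • ((a ^ (-1 - (i : ℤ)) : Mˣ) : M) := by
    simp [invPowCombination_apply, Fin.sum_univ_castSucc]
  have hmul (j : ℤ) : (a : M) * ↑(a ^ (-1 - j)) = ↑(a ^ (-j)) := by
    rw [← Units.val_mul, ← zpow_one_add]
    congr 2
    ring
  rw [companionOf_mulVec, map_add, map_smul, invPowCombination_rev_eq_one hrel, hshift,
    invPowCombination_apply, Finset.mul_sum, Fin.sum_univ_succ]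
  simp_rw [mul_smul_comm, hmul]
  simp [sub_eq_add_neg]

theorem zpow_eq_sum_companion_zpow_mulVec_general (n : ℕ)
    (A : Matrix (Fin n) (Fin n) ℂ) (hA : IsUnit A) (p : ℕ)
    (c : Fin p → ℂ)
    (hm : minpoly ℂ A =
      Polynomial.X ^ p - ∑ i : Fin p, Polynomial.C (c i) * Polynomial.X ^ (i : ℕ)) :
    IsUnit (companionOf p c) ∧
      ∀ k : ℤ, A ^ k =
        ∑ i : Fin p,
          ((companionOf p c) ^ k).mulVec (fun j : Fin p => c j.rev) i • A ^ (-1 - (i : ℤ)) := by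
  obtain ⟨u, rfl⟩ := hA
  have hrel := pow_eq_sum_smul_pow_of_minpoly_eq hm
  have hC := isUnit_companionOf_of_minpoly_eq u.isUnit (Matrix.isIntegral _) hm
  refine ⟨hC, fun k => ?_⟩
  have h := apply_zpow_mulVec_of_apply_mulVec hC u
    (invPowCombination_companionOf_mulVec hrel) k (fun j => c j.rev)
  rw [invPowCombination_rev_eq_one hrel, mul_one, invPowCombination_apply] at h
  simp_rw [← Matrix.coe_units_zpow, ← h]

/-- if `A` has minimal polynomial `m = X^p − c_{p−1}X^{p−1} − ⋯ − c_0` with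
companion matrix `C_m`, and `c = (c_{p−1}, …, c_0)` (the vector `fun j => c j.rev`), then
`C_m` is invertible and for every `k ∈ ℤ`, `A^k = Σ_{i=1}^p ((C_m)^k c)_i A^{−i}`
(zero-based: index `i : Fin p` corresponds to `A^{−1−i}`). -/
theorem zpow_eq_sum_companion_zpow_mulVec (n : ℕ) (hn : 1 ≤ n)
    (A : Matrix (Fin n) (Fin n) ℂ) (hA : IsUnit A) (p : ℕ) (hp : 1 ≤ p)
    (c : Fin p → ℂ)
    (hm : minpoly ℂ A =
      Polynomial.X ^ p - ∑ i : Fin p, Polynomial.C (c i) * Polynomial.X ^ (i : ℕ)) :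
    IsUnit (companionOf p c) ∧
      ∀ k : ℤ, A ^ k =
        ∑ i : Fin p,
          ((companionOf p c) ^ k).mulVec (fun j : Fin p => c j.rev) i • A ^ (-1 - (i : ℤ)) :=
  zpow_eq_sum_companion_zpow_mulVec_general n A hA p c hm
end

section
/- Let n ≥ 1 and A ∈ GL_n(ℂ), and suppose the minimal polynomial of A over ℂ has degree p. Then there exists a C-flow φ of A, with all entry functions analytic on ℂ, such that φ(z) ∈ V_A for every z ∈ ℂ; equivalently, φ(z) lies in the ℂ-linear span of {I, A, …, A^{p−1}} for every z ∈ ℂ. -/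
/-!
A logarithm of `A` can be found inside the commutative finite-dimensional algebra `ℂ[A]`. In a
commutative Banach algebra, `exp` is a homomorphism whose image contains a neighbourhood of `1`,
so being an exponential is locally constant on the units. The segment from `1` to `A` leaves the
units only at the finitely many parameters `t` with `1 - t⁻¹` in the spectrum of `A`, and the
complement of a finite set in `ℂ` is connected; hence `A`, like `1`, is an exponential `exp B` with
`B ∈ ℂ[A]`. The flow is `z ↦ exp (z • B)`, which stays in `ℂ[A]`, the span of the powers `A ^ i`
with `i` below the degree of the minimal polynomial.
-/

open NormedSpace Filter Topology Set

theorem spectrum.finite_of_finiteDimensional {K A : Type*} [Field K] [Ring A] [Algebra K A]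
    [FiniteDimensional K A] (a : A) : (spectrum K a).Finite := by
  classical
  nontriviality A
  refine (minpoly K a).roots.toFinset.finite_toSet.subset fun r hr => ?_
  have hroot := spectrum.subset_polynomial_aeval a (minpoly K a) ⟨r, hr, rfl⟩
  rw [minpoly.aeval, spectrum.zero_eq, mem_singleton_iff] at hroot
  simpa [minpoly.ne_zero (IsIntegral.of_finite K a)] using hroot

theorem Subalgebra.isUnit_of_isUnit_coe {K A : Type*} [Field K] [Ring A] [Algebra K A]
    {S : Subalgebra K A} [FiniteDimensional K S] {x : S} (hx : IsUnit (x : A)) : IsUnit x :=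
  IsArtinianRing.isUnit_of_nonZeroDivisor_of_isIntegral' (R := K)
    (comap_nonZeroDivisors_le_of_injective (f := S.val) Subtype.val_injective
      hx.mem_nonZeroDivisors)

theorem IsIntegral.span_range_pow_eq_adjoin {R A : Type*} [CommRing R] [Ring A] [Algebra R A]
    {a : A} (ha : IsIntegral R a) :
    Submodule.span R (range fun i : Fin (minpoly R a).natDegree => a ^ (i : ℕ)) =
      Subalgebra.toSubmodule (Algebra.adjoin R {a}) := by
  classical
  rw [← Submodule.span_range_natDegree_eq_adjoin (minpoly.monic ha) (minpoly.aeval R a),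
    Finset.coe_image, Finset.coe_range, ← Fin.range_val, ← range_comp]
  rfl

theorem finite_setOf_not_isUnit_lineMap {K A : Type*} [Field K] [Ring A] [Algebra K A] {a : A}
    (ha : (spectrum K a).Finite) : {t : K | ¬IsUnit (AffineMap.lineMap 1 a t)}.Finite := by
  refine (ha.preimage ((sub_right_injective (b := (1 : K))).comp inv_injective).injOn).subset
    fun t ht => ?_
  have ht0 : t ≠ 0 := by rintro rfl; simp at ht
  have hline : AffineMap.lineMap 1 a t =
      algebraMap K A (-t) * (algebraMap K A (1 - t⁻¹) - a) := by
    rw [AffineMap.lineMap_apply_module, mul_sub, ← map_mul, ← Algebra.smul_def,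
      Algebra.algebraMap_eq_smul_one, neg_mul, mul_sub, mul_inv_cancel₀ ht0]
    simp only [neg_smul, sub_smul, mul_one]
    abel
  exact fun hunit => ht (hline ▸ ((isUnit_iff_ne_zero.2 (neg_ne_zero.2 ht0)).map _).mul hunit)

theorem range_exp_mem_nhds_one {𝕂 𝔸 : Type*} [RCLike 𝕂] [NormedRing 𝔸] [NormedAlgebra 𝕂 𝔸]
    [CompleteSpace 𝔸] : range (exp : 𝔸 → 𝔸) ∈ 𝓝 1 := by
  have hexp : HasStrictFDerivAt exp ((ContinuousLinearEquiv.refl 𝕂 𝔸 : 𝔸 →L[𝕂] 𝔸)) 0 :=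
    hasStrictFDerivAt_exp_zero
  rw [← exp_zero, ← hexp.map_nhds_eq_of_equiv]
  exact range_mem_map

theorem mul_exp_mem_range_exp_iff {𝔸 : Type*} [NormedCommRing 𝔸] [NormedAlgebra ℚ 𝔸]
    [CompleteSpace 𝔸] (u d : 𝔸) : u * exp d ∈ range exp ↔ u ∈ range exp := by
  refine ⟨fun ⟨c, hc⟩ => ⟨c - d, ?_⟩, fun ⟨c, hc⟩ => ⟨c + d, hc ▸ exp_add⟩⟩
  rw [sub_eq_add_neg, exp_add, hc, mul_assoc, ← exp_add, add_neg_cancel, exp_zero, mul_one]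

theorem eventually_mem_range_exp_iff (𝕂 : Type*) {𝔸 : Type*} [RCLike 𝕂] [NormedCommRing 𝔸]
    [NormedAlgebra 𝕂 𝔸] [CompleteSpace 𝔸] {u : 𝔸} (hu : IsUnit u) :
    ∀ᶠ a in 𝓝 u, a ∈ range exp ↔ u ∈ range exp := by
  let +nondep : NormedAlgebra ℚ 𝔸 := .restrictScalars ℚ 𝕂 𝔸
  obtain ⟨u, rfl⟩ := hu
  have hcont : Tendsto (fun a => ((u⁻¹ : 𝔸ˣ) : 𝔸) * a) (𝓝 (u : 𝔸)) (𝓝 1) := by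
    simpa using (continuous_const_mul ((u⁻¹ : 𝔸ˣ) : 𝔸)).tendsto (u : 𝔸)
  filter_upwards [hcont (range_exp_mem_nhds_one (𝕂 := 𝕂))] with a ⟨d, hd⟩
  rw [show a = u * exp d by rw [hd, Units.mul_inv_cancel_left]]
  exact mul_exp_mem_range_exp_iff _ _

theorem IsPreconnected.mem_range_exp_iff (𝕂 : Type*) {𝔸 X : Type*} [RCLike 𝕂] [NormedCommRing 𝔸]
    [NormedAlgebra 𝕂 𝔸] [CompleteSpace 𝔸] [TopologicalSpace X] {U : Set X}
    (hU : IsPreconnected U) {f : X → 𝔸} (hf : ContinuousOn f U) (hunit : ∀ t ∈ U, IsUnit (f t))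
    {x y : X} (hx : x ∈ U) (hy : y ∈ U) : f x ∈ range exp ↔ f y ∈ range exp := by
  refine hU.induction₂' (fun x y => f x ∈ range exp ↔ f y ∈ range exp) (fun x hx => ?_)
    (fun _ _ _ _ _ _ => Iff.trans) hx hy
  filter_upwards [(hf x hx).tendsto.eventually (eventually_mem_range_exp_iff 𝕂 (hunit x hx))]
    with y hy
  exact ⟨hy.symm, hy⟩

theorem exists_exp_eq_of_isUnit {𝔸 : Type*} [NormedCommRing 𝔸] [NormedAlgebra ℂ 𝔸]
    [CompleteSpace 𝔸] {a : 𝔸} (ha : IsUnit a) (hσ : (spectrum ℂ a).Finite) :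
    ∃ b, exp b = a := by
  set U := {t : ℂ | IsUnit (AffineMap.lineMap 1 a t)}
  have hU : IsPreconnected U := by
    have hconn := (finite_setOf_not_isUnit_lineMap hσ).countable.isConnected_compl_of_one_lt_rank
      (by rw [Complex.rank_real_complex]; exact Nat.one_lt_ofNat)
    simpa [U, compl_ofPred] using hconn.isPreconnected
  have hline := hU.mem_range_exp_iff ℂ AffineMap.lineMap_continuous.continuousOn
    (fun t ht => ht) (x := 0) (y := 1) (by simp [U]) (by simpa [U] using ha)
  simpa using hline.1 ⟨0, by simp⟩

theorem exists_mem_adjoin_exp_eq_of_isUnit {𝔸 : Type*} [NormedRing 𝔸] [NormedAlgebra ℂ 𝔸]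
    [FiniteDimensional ℂ 𝔸] {a : 𝔸} (ha : IsUnit a) :
    ∃ b ∈ Algebra.adjoin ℂ {a}, exp b = a := by
  set S := Algebra.adjoin ℂ {a}
  let : NormedCommRing S := { SubringClass.toNormedRing S with mul_comm := mul_comm }
  have : CompleteSpace S := FiniteDimensional.complete ℂ S
  let +nondep : NormedAlgebra ℚ S := .restrictScalars ℚ ℂ S
  let +nondep : NormedAlgebra ℚ 𝔸 := .restrictScalars ℚ ℂ 𝔸
  obtain ⟨b, hb⟩ := exists_exp_eq_of_isUnit
    (a := (⟨a, Algebra.self_mem_adjoin_singleton ℂ a⟩ : S))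
    (Subalgebra.isUnit_of_isUnit_coe ha) (spectrum.finite_of_finiteDimensional _)
  exact ⟨b, b.2, by simpa [hb] using (map_exp S.val continuous_subtype_val b).symm⟩

namespace Matrix

variable {n : Type*} [Fintype n] [DecidableEq n]

theorem exists_mem_adjoin_exp_eq_of_isUnit {A : Matrix n n ℂ} (hA : IsUnit A) :
    ∃ B ∈ Algebra.adjoin ℂ {A}, exp B = A := by
  let : NormedRing (Matrix n n ℂ) := Matrix.linftyOpNormedRing
  let : NormedAlgebra ℂ (Matrix n n ℂ) := Matrix.linftyOpNormedAlgebra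
  exact _root_.exists_mem_adjoin_exp_eq_of_isUnit hA

theorem exp_mem {S : Subalgebra ℂ (Matrix n n ℂ)} {B : Matrix n n ℂ} (hB : B ∈ S) :
    exp B ∈ S :=
  NormedSpace.exp_mem (R := ℂ) (s := S) S.toSubmodule.closed_of_finiteDimensional hB

theorem differentiable_exp_smul_apply (B : Matrix n n ℂ) (i j : n) :
    Differentiable ℂ fun z : ℂ => exp (z • B) i j := by
  let : NormedRing (Matrix n n ℂ) := Matrix.linftyOpNormedRing
  let : NormedAlgebra ℂ (Matrix n n ℂ) := Matrix.linftyOpNormedAlgebra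
  exact (entryLinearMap ℂ ℂ i j).toContinuousLinearMap.differentiable.comp
    fun z => (hasDerivAt_exp_smul_const B z).differentiableAt

end Matrix

theorem exists_C_flow_mem_span_powers_general (n : ℕ)
    (A : Matrix (Fin n) (Fin n) ℂ) (hA : IsUnit A) (p : ℕ)
    (hp : (minpoly ℂ A).natDegree = p) :
    ∃ φ : ℂ → Matrix (Fin n) (Fin n) ℂ,
      (∀ z w : ℂ, φ (z + w) = φ z * φ w) ∧
      φ 0 = 1 ∧
      φ 1 = A ∧
      (∀ i j : Fin n, Differentiable ℂ (fun z : ℂ => φ z i j)) ∧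
      ∀ z : ℂ, φ z ∈ Submodule.span ℂ (Set.range fun i : Fin p => A ^ (i : ℕ)) := by
  obtain ⟨B, hBA, hB⟩ := Matrix.exists_mem_adjoin_exp_eq_of_isUnit hA
  refine ⟨fun z => exp (z • B), fun z w => ?_, by simp, by simpa using hB,
    Matrix.differentiable_exp_smul_apply B, fun z => ?_⟩
  · dsimp only
    rw [add_smul]
    exact Matrix.exp_add_of_commute _ _ (((Commute.refl B).smul_left z).smul_right w)
  · rw [← hp, (IsIntegral.of_finite ℂ A).span_range_pow_eq_adjoin]
    exact Matrix.exp_mem (Subalgebra.smul_mem _ hBA z)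

/-- if the minimal polynomial of the invertible matrix `A` has degree `p`,
then there is a C-flow `φ` of `A` with all entry functions differentiable on `ℂ` such that
`φ(z)` lies in the ℂ-span of `I, A, …, A^{p−1}` for every `z ∈ ℂ`. -/
theorem exists_C_flow_mem_span_powers (n : ℕ) (hn : 1 ≤ n)
    (A : Matrix (Fin n) (Fin n) ℂ) (hA : IsUnit A) (p : ℕ)
    (hp : (minpoly ℂ A).natDegree = p) :
    ∃ φ : ℂ → Matrix (Fin n) (Fin n) ℂ,
      (∀ z w : ℂ, φ (z + w) = φ z * φ w) ∧
      φ 0 = 1 ∧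
      φ 1 = A ∧
      (∀ i j : Fin n, Differentiable ℂ (fun z : ℂ => φ z i j)) ∧
      ∀ z : ℂ, φ z ∈ Submodule.span ℂ (Set.range fun i : Fin p => A ^ (i : ℕ)) :=
  exists_C_flow_mem_span_powers_general n A hA p hp
end

section
/- Let λ_1, …, λ_m ∈ ℂ be pairwise distinct and nonzero, let n_1, …, n_m ≥ 1 be integers with n_1 + ⋯ + n_m = p. Consider the p×p matrix M whose rows are indexed by j ∈ {1, …, p} and whose columns are indexed by pairs (i, l) with 1 ≤ i ≤ m and 0 ≤ l ≤ n_i − 1, with entry M_{j,(i,l)} = g_l(−j) · λ_i^{−j−l} (integer powers of the nonzero λ_i). Then M is invertible, i.e. det(M) ≠ 0. -/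
open Polynomial

noncomputable def Dop (p : ℕ) : ℕ → Polynomial ℂ → Polynomial ℂ
  | 0, Q => Q
  | (l+1), Q => X * derivative (Dop p l Q) - C ((p : ℂ) + l) * Dop p l Q

lemma Dop_sum (p l : ℕ) {ι : Type*} (s : Finset ι) (f : ι → Polynomial ℂ) :
    Dop p l (∑ j ∈ s, f j) = ∑ j ∈ s, Dop p l (f j) := by
  induction l with
  | zero => simp [Dop]
  | succ l ih => simp [Dop, ih, derivative_sum, Finset.mul_sum, Finset.sum_sub_distrib]

lemma X_mul_deriv (b : ℂ) (n : ℕ) :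
    X * derivative (C b * X ^ n) = C (n : ℂ) * (C b * X ^ n) := by
  cases n with
  | zero => simp
  | succ n =>
    simp only [derivative_C_mul, derivative_X_pow]
    push_cast
    ring

lemma Dop_C_mul_X_pow (p l : ℕ) (a : ℂ) (n : ℕ) :
    Dop p l (C a * X ^ n) =
      C (∏ t ∈ Finset.range l, ((n : ℂ) - p - t)) * (C a * X ^ n) := by
  induction l with
  | zero => simp [Dop]
  | succ l ih =>
    have key : ∀ x y : ℂ, C x * (C y * X ^ n) = C (x * y) * X ^ n := fun x y => by
      rw [C_mul, mul_assoc]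
    rw [Dop, ih, key, X_mul_deriv]
    simp only [key]
    rw [Finset.prod_range_succ, ← sub_mul, ← C_sub]
    congr 2
    ring

lemma key_step (lam c : ℂ) (hlam : lam ≠ 0) (R : Polynomial ℂ) (hR : R.eval lam = 0) (k : ℕ)
    (hd : (X - C lam) ^ k ∣ (X * derivative R - C c * R)) : (X - C lam) ^ (k + 1) ∣ R := by
  rcases eq_or_ne R 0 with rfl | hR0
  · exact dvd_zero _
  obtain ⟨S, hS, hnd⟩ := R.exists_eq_pow_rootMultiplicity_mul_and_not_dvd hR0 lam
  set j := R.rootMultiplicity lam with hj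
  have hj1 : 1 ≤ j := (Polynomial.rootMultiplicity_pos hR0).mpr hR
  have hSe : S.eval lam ≠ 0 := fun h => hnd (dvd_iff_isRoot.mpr h)
  set T : Polynomial ℂ := C (j : ℂ) * X * S + (X - C lam) * (X * derivative S - C c * S) with hT
  have hdec : X * derivative R - C c * R = (X - C lam) ^ (j - 1) * T := by
    have hpow : (X - C lam) ^ j = (X - C lam) ^ (j - 1) * (X - C lam) := by
      rw [← pow_succ, Nat.sub_add_cancel hj1]
    rw [hS, hT, derivative_mul, derivative_pow, derivative_X_sub_C, hpow]
    ring
  have hTe : T.eval lam ≠ 0 := by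
    have : T.eval lam = (j : ℂ) * lam * S.eval lam := by simp [hT]
    rw [this]
    exact mul_ne_zero (mul_ne_zero (Nat.cast_ne_zero.mpr (by omega)) hlam) hSe
  have hXne : (X - C lam : Polynomial ℂ) ^ (j - 1) ≠ 0 := pow_ne_zero _ (X_sub_C_ne_zero lam)
  have hk : k ≤ j - 1 := by
    by_contra hk
    push_neg at hk
    have h1 : (X - C lam) ^ (j - 1) * (X - C lam) ∣ (X - C lam) ^ (j - 1) * T := by
      rw [← pow_succ, ← hdec]
      exact dvd_trans (pow_dvd_pow _ (by omega)) hd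
    have := (mul_dvd_mul_iff_left hXne).mp h1
    exact hnd (False.elim (hTe ((dvd_iff_isRoot.mp this).symm ▸ rfl)))
  have : (X - C lam) ^ (k + 1) ∣ (X - C lam) ^ j := pow_dvd_pow _ (by omega)
  exact this.trans ⟨S, hS⟩

lemma iter_dvd (p : ℕ) (lam : ℂ) (hlam : lam ≠ 0) (Q : Polynomial ℂ) (t : ℕ) :
    ∀ l, (∀ s < t, (Dop p (l + s) Q).eval lam = 0) → (X - C lam) ^ t ∣ Dop p l Q := by
  induction t with
  | zero => intro l _; simp
  | succ t ih =>
    intro l hev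
    have h1 : (X - C lam) ^ t ∣ Dop p (l + 1) Q := by
      apply ih
      intro s hs
      have := hev (s + 1) (by omega)
      rwa [show l + (s + 1) = l + 1 + s by omega] at this
    have h0 : (Dop p l Q).eval lam = 0 := by simpa using hev 0 (by omega)
    rw [show Dop p (l+1) Q = X * derivative (Dop p l Q) - C ((p : ℂ) + l) * Dop p l Q from rfl] at h1
    exact key_step lam _ hlam _ h0 t h1




/-- the generalized Vandermonde matrix with rows `j ∈ {1, …, p}` (here the
row index `j : Fin p` encodes `j+1`) and columns indexed by pairs `(i, l)` with
`1 ≤ i ≤ m`, `0 ≤ l ≤ n_i − 1`, and entries `g_l(−j)·λ_i^{−j−l}`, is invertible: for any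
identification `e` of the column index set with `Fin p`, its determinant is nonzero. -/
theorem generalized_vandermonde_det_ne_zero (m p : ℕ) (lam : Fin m → ℂ)
    (hinj : Function.Injective lam) (hne : ∀ i, lam i ≠ 0)
    (nsize : Fin m → ℕ) (hns : ∀ i, 1 ≤ nsize i) (hsum : ∑ i, nsize i = p) :
    ∀ e : ((i : Fin m) × Fin (nsize i)) ≃ Fin p,
      (Matrix.of fun j k : Fin p =>
          g ((e.symm k).2 : ℕ) (-((j : ℕ) : ℂ) - 1) *
            lam (e.symm k).1 ^ (-((j : ℕ) : ℤ) - 1 - (((e.symm k).2 : ℕ) : ℤ))).det ≠ 0 := by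
  intro e
  by_contra hdet
  obtain ⟨v, hv0, hv⟩ := Matrix.exists_vecMul_eq_zero_iff.mpr hdet
  rcases Nat.eq_zero_or_pos p with hp0 | hp1
  · subst hp0
    exact hv0 (funext fun j => j.elim0)
  set Q : Polynomial ℂ := ∑ j : Fin p, C (v j) * X ^ (p - 1 - (j : ℕ)) with hQdef
  -- column conditions
  have hcol : ∀ (i : Fin m) (l : Fin (nsize i)),
      ∑ j : Fin p, v j * (g (l : ℕ) (-((j : ℕ) : ℂ) - 1) *
        lam i ^ (-((j : ℕ) : ℤ) - 1 - ((l : ℕ) : ℤ))) = 0 := by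
    intro i l
    have h2 := congrFun hv (e ⟨i, l⟩)
    have hsy : e.symm (e ⟨i, l⟩) = ⟨i, l⟩ := e.symm_apply_apply _
    have h3 : ((e.symm (e ⟨i, l⟩)).snd : ℕ) = (l : ℕ) := by rw [hsy]
    have h4 : (e.symm (e ⟨i, l⟩)).fst = i := by rw [hsy]
    simp only [Matrix.vecMul, dotProduct, Matrix.of_apply, Pi.zero_apply, h3, h4] at h2
    exact h2
  -- evaluation of Dop at lam i vanishes
  have heval : ∀ (i : Fin m), ∀ s < nsize i, (Dop p s Q).eval (lam i) = 0 := by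
    intro i s hs
    have hkey : (Dop p s Q).eval (lam i) =
        (s.factorial : ℂ) * lam i ^ ((p : ℤ) + s) *
          ∑ j : Fin p, v j * (g s (-((j : ℕ) : ℂ) - 1) *
            lam i ^ (-((j : ℕ) : ℤ) - 1 - (s : ℤ))) := by
      rw [hQdef, Dop_sum, eval_finset_sum, Finset.mul_sum]
      apply Finset.sum_congr rfl
      intro j _
      rw [Dop_C_mul_X_pow]
      simp only [eval_mul, eval_C, eval_pow, eval_X]
      have hj := j.isLt
      have hcast : ((p - 1 - (j : ℕ) : ℕ) : ℂ) = (p : ℂ) - 1 - ((j : ℕ) : ℂ) := by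
        rw [show p - 1 - (j : ℕ) = p - ((j : ℕ) + 1) by omega,
          Nat.cast_sub (by omega : (j : ℕ) + 1 ≤ p)]
        push_cast
        ring
      have hprod : (∏ t ∈ Finset.range s, (((p - 1 - (j : ℕ) : ℕ) : ℂ) - p - t)) =
          (s.factorial : ℂ) * g s (-((j : ℕ) : ℂ) - 1) := by
        rw [g, mul_div_cancel₀ _ (by exact_mod_cast s.factorial_ne_zero)]
        apply Finset.prod_congr rfl
        intro t _
        rw [hcast]
        ring
      have hzpow : lam i ^ (p - 1 - (j : ℕ)) =
          lam i ^ ((p : ℤ) + s) * lam i ^ (-((j : ℕ) : ℤ) - 1 - (s : ℤ)) := by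
        rw [← zpow_natCast, ← zpow_add₀ (hne i)]
        congr 1
        omega
      rw [hprod, hzpow]
      ring
    rw [hkey, hcol i ⟨s, hs⟩, mul_zero]
  -- divisibility
  have hdvd : ∀ i : Fin m, (X - C (lam i)) ^ (nsize i) ∣ Q := by
    intro i
    have := iter_dvd p (lam i) (hne i) Q (nsize i) 0
      (fun s hs => by rw [zero_add]; exact heval i s hs)
    simpa [Dop] using this
  have hprodvd : (∏ i : Fin m, (X - C (lam i)) ^ (nsize i)) ∣ Q :=
    Finset.prod_dvd_of_coprime
      (fun a _ b _ hab => ((Polynomial.pairwise_coprime_X_sub_C hinj) hab).pow)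
      (fun i _ => hdvd i)
  have hQ0 : Q = 0 := by
    by_contra h
    have hd1 : (∏ i : Fin m, (X - C (lam i)) ^ (nsize i)).natDegree ≤ Q.natDegree :=
      natDegree_le_of_dvd hprodvd h
    have hdeg : (∏ i : Fin m, (X - C (lam i)) ^ (nsize i)).natDegree = p := by
      rw [natDegree_prod _ _ (fun i _ => pow_ne_zero _ (X_sub_C_ne_zero _))]
      simp [natDegree_pow, natDegree_X_sub_C, hsum]
    have hQdeg : Q.natDegree ≤ p - 1 := by
      rw [hQdef]
      apply Polynomial.natDegree_sum_le_of_forall_le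
      intro j _
      exact (natDegree_C_mul_X_pow_le _ _).trans (by omega)
    omega
  -- conclude v = 0
  apply hv0
  funext j
  have hj := j.isLt
  have := congrArg (fun q : Polynomial ℂ => q.coeff (p - 1 - (j : ℕ))) hQ0
  simp only [hQdef, finset_sum_coeff, coeff_C_mul, coeff_X_pow, coeff_zero] at this
  rw [Finset.sum_eq_single j] at this
  · simpa using this
  · intro j' _ hj'
    have : ¬ (p - 1 - (j : ℕ) = p - 1 - (j' : ℕ)) := by
      have := j'.isLt
      intro h
      exact hj' (Fin.ext (by omega))
    simp [this]
  · simp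
end
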